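/- There exist constants C > 0 and delta_0 > 0 depending only on w such that for every unit vector n in R^2, every delta in (0, delta_0], and every square-summable family (u^(xi))_{xi in Z^2, xi ≠ 0} in C^2 the following nonlocal Helmholtz decomposition holds: for each xi ≠ 0 there exist unique p^(xi), q^(xi) in C such that u^(xi) = lambda_delta^n(xi) p^(xi) + R lambda_delta^{-n}(xi) q^(xi), where R is the rotation matrix with rows (0,-1) and (1,0). Moreover the second term is nonlocally divergence-free, i.e. lambda_delta^{-n}(xi)^T ( R lambda_delta^{-n}(xi) ) q^(xi) = 0 for every xi ≠ 0, and Sum_{xi ≠ 0} |lambda_delta^n(xi)|^2 ( |p^(xi)|^2 + |q^(xi)|^2 ) <= C Sum_{xi ≠ 0} |u^(xi)|^2. -/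

import Mathlib

open MeasureTheory Real Set
open scoped BigOperators

noncomputable section

/-- The scaled kernel `w_δ(r) = δ^{-3} w(r/δ)` (dimension 2). -/
def wS (w : ℝ → ℝ) (δ r : ℝ) : ℝ := w (r / δ) / δ ^ 3

/-- The half space `H_n = {z : z ⬝ n ≥ 0}`. -/
def halfSp (n : EuclideanSpace ℝ (Fin 2)) : Set (EuclideanSpace ℝ (Fin 2)) :=
  {z | 0 ≤ ∑ i, z i * n i}

/-- `i`-th component of the Fourier symbol `λ_δ^n(ξ)`. -/
def symb (w : ℝ → ℝ) (δ : ℝ) (n : EuclideanSpace ℝ (Fin 2)) (ξ : Fin 2 → ℤ) (i : Fin 2) : ℂ :=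
  2 * ∫ s in halfSp n, ((wS w δ ‖s‖ * s i / ‖s‖ : ℝ) : ℂ) *
      (Complex.exp (Complex.I * (∑ j, (ξ j : ℝ) * s j)) - 1)

/-- `|λ_δ^n(ξ)|²`. -/
def lamSq (w : ℝ → ℝ) (δ : ℝ) (n : EuclideanSpace ℝ (Fin 2)) (ξ : Fin 2 → ℤ) : ℝ :=
  ∑ i, Complex.normSq (symb w δ n ξ i)

/-- The rotation `R = [[0,-1],[1,0]]` applied to a vector of `ℂ²`. -/
def rot (v : Fin 2 → ℂ) : Fin 2 → ℂ := ![-v 1, v 0]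

abbrev E2 := EuclideanSpace ℝ (Fin 2)

lemma coord_continuous (i : Fin 2) : Continuous fun s : E2 => s i := by
  exact (EuclideanSpace.proj i).continuous

lemma abs_coord_le_norm (s : E2) (i : Fin 2) : |s i| ≤ ‖s‖ := by
  have := EuclideanSpace.norm_eq s
  rw [this]
  have h1 : |s i| = Real.sqrt (‖s i‖^2) := by
    rw [Real.sqrt_sq_eq_abs]; simp
  rw [h1]
  apply Real.sqrt_le_sqrt
  exact Finset.single_le_sum (f := fun j => ‖s j‖^2) (fun j _ => sq_nonneg _) (Finset.mem_univ i)

lemma norm_exp_I_mul_sub_one_le (t : ℝ) : ‖Complex.exp (Complex.I * t) - 1‖ ≤ 2 * |t| := by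
  rcases le_or_gt (|t|) 1 with h | h
  · have h2 : ‖Complex.I * t‖ ≤ 1 := by simpa using h
    simpa using Complex.norm_exp_sub_one_le h2
  · have h1 : ‖Complex.exp (Complex.I * t)‖ = 1 := by
      rw [Complex.norm_exp]; simp
    calc ‖Complex.exp (Complex.I * t) - 1‖ ≤ ‖Complex.exp (Complex.I * t)‖ + ‖(1:ℂ)‖ :=
          norm_sub_le _ _
    _ = 2 := by simp [h1]; norm_num
    _ ≤ 2 * |t| := by nlinarith

lemma integrable_base {w : ℝ → ℝ}
    (hmom : (∫ x : E2, w ‖x‖ * ‖x‖) = 2) :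
    Integrable (fun x : E2 => w ‖x‖ * ‖x‖) := by
  by_contra h
  rw [integral_undef h] at hmom
  norm_num at hmom

lemma integrable_scaled {w : ℝ → ℝ} (hmom : (∫ x : E2, w ‖x‖ * ‖x‖) = 2)
    {δ : ℝ} (hδ : 0 < δ) :
    Integrable (fun x : E2 => w (‖x‖ / δ) * ‖x‖) := by
  have h0 := integrable_base hmom
  have h1 : Integrable (fun x : E2 => w ‖δ⁻¹ • x‖ * ‖δ⁻¹ • x‖) :=
    (integrable_comp_smul_iff volume (fun x : E2 => w ‖x‖ * ‖x‖) (inv_ne_zero hδ.ne')).2 h0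
  have h2 := h1.const_mul δ
  refine h2.congr (Filter.Eventually.of_forall fun x => ?_)
  have hns : ‖δ⁻¹ • x‖ = ‖x‖ / δ := by
    rw [norm_smul, norm_inv, Real.norm_eq_abs, abs_of_pos hδ]
    ring
  simp only [hns]
  field_simp

/-- The symbol integrand, written with a real phase. -/
def F (w : ℝ → ℝ) (δ : ℝ) (ξ : Fin 2 → ℤ) (i : Fin 2) (s : E2) : ℂ :=
  ((wS w δ ‖s‖ * s i / ‖s‖ : ℝ) : ℂ) *
    (Complex.exp (Complex.I * ((∑ j, (ξ j : ℝ) * s j : ℝ) : ℂ)) - 1)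

lemma symb_eq_F (w : ℝ → ℝ) (δ : ℝ) (n : E2) (ξ : Fin 2 → ℤ) (i : Fin 2) :
    symb w δ n ξ i = 2 * ∫ s in halfSp n, F w δ ξ i s := by
  rfl

lemma F_measurable {w : ℝ → ℝ} (hwmeas : Measurable w) (δ : ℝ) (ξ : Fin 2 → ℤ) (i : Fin 2) :
    Measurable (F w δ ξ i) := by
  unfold F wS
  apply Measurable.mul
  · apply Complex.measurable_ofReal.comp
    apply Measurable.div
    · exact ((hwmeas.comp (measurable_norm.div_const δ)).div_const _).mul
        (coord_continuous i).measurable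
    · exact measurable_norm
  · apply Measurable.sub _ measurable_const
    apply Complex.measurable_exp.comp
    apply Measurable.const_mul
    exact Complex.measurable_ofReal.comp
      (Finset.measurable_sum _ fun j _ => ((coord_continuous j).measurable.const_mul _))

lemma F_integrable {w : ℝ → ℝ} (hwmeas : Measurable w) (hwnn : ∀ r, 0 ≤ w r)
    (hmom : (∫ x : E2, w ‖x‖ * ‖x‖) = 2) {δ : ℝ} (hδ : 0 < δ) (ξ : Fin 2 → ℤ) (i : Fin 2) :
    Integrable (F w δ ξ i) := by
  set K : ℝ := ∑ j, |(ξ j : ℝ)| with hK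
  have hK0 : 0 ≤ K := Finset.sum_nonneg fun j _ => abs_nonneg _
  have hbase := (integrable_scaled hmom hδ).const_mul (2 * K / δ ^ 3)
  refine hbase.mono' (F_measurable hwmeas δ ξ i).aestronglyMeasurable
    (Filter.Eventually.of_forall fun s => ?_)
  unfold F wS
  rw [norm_mul]
  have ht : |(∑ j, (ξ j : ℝ) * s j)| ≤ K * ‖s‖ := by
    calc |(∑ j, (ξ j : ℝ) * s j)| ≤ ∑ j, |(ξ j : ℝ) * s j| := Finset.abs_sum_le_sum_abs _ _
    _ ≤ ∑ j, |(ξ j : ℝ)| * ‖s‖ := by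
        refine Finset.sum_le_sum fun j _ => ?_
        rw [abs_mul]
        exact mul_le_mul_of_nonneg_left (abs_coord_le_norm s j) (abs_nonneg _)
    _ = K * ‖s‖ := by rw [← Finset.sum_mul]
  have h1 : ‖((w (‖s‖ / δ) / δ ^ 3 * s i / ‖s‖ : ℝ) : ℂ)‖ ≤ w (‖s‖ / δ) / δ ^ 3 := by
    rw [Complex.norm_real, Real.norm_eq_abs]
    rcases eq_or_ne (‖s‖) 0 with h | h
    · have : s i = 0 := by
        have := abs_coord_le_norm s i; rw [h] at this
        exact abs_eq_zero.mp (le_antisymm this (abs_nonneg _))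
      simp [this, h]
      exact div_nonneg (hwnn _) (by positivity)
    · have hw3 : (0:ℝ) ≤ w (‖s‖ / δ) / δ ^ 3 := div_nonneg (hwnn _) (by positivity)
      rw [abs_div, abs_mul, abs_of_nonneg hw3, abs_of_nonneg (norm_nonneg s)]
      rw [div_le_iff₀ (lt_of_le_of_ne (norm_nonneg s) (Ne.symm h))]
      exact mul_le_mul_of_nonneg_left (abs_coord_le_norm s i) hw3
  have h2 : ‖Complex.exp (Complex.I * ((∑ j, (ξ j : ℝ) * s j : ℝ) : ℂ)) - 1‖
      ≤ 2 * (K * ‖s‖) := by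
    refine (norm_exp_I_mul_sub_one_le _).trans ?_
    nlinarith [abs_nonneg (∑ j, (ξ j : ℝ) * s j)]
  calc ‖((w (‖s‖ / δ) / δ ^ 3 * s i / ‖s‖ : ℝ) : ℂ)‖ *
      ‖Complex.exp (Complex.I * ((∑ j, (ξ j : ℝ) * s j : ℝ) : ℂ)) - 1‖
      ≤ (w (‖s‖ / δ) / δ ^ 3) * (2 * (K * ‖s‖)) := by
        apply mul_le_mul h1 h2 (norm_nonneg _) (div_nonneg (hwnn _) (by positivity))
  _ = 2 * K / δ ^ 3 * (w (‖s‖ / δ) * ‖s‖) := by ring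

lemma halfSp_neg (n : E2) : halfSp (-n) = Neg.neg ⁻¹' (halfSp n) := by
  ext z
  simp only [halfSp, mem_setOf_eq, mem_preimage]
  constructor
  · intro h
    calc (0:ℝ) ≤ ∑ i, z i * (-n) i := h
    _ = ∑ i, (-z) i * n i := by
        refine Finset.sum_congr rfl fun i _ => ?_
        simp
  · intro h
    calc (0:ℝ) ≤ ∑ i, (-z) i * n i := h
    _ = ∑ i, z i * (-n) i := by
        refine Finset.sum_congr rfl fun i _ => ?_
        simp

lemma symb_neg {w : ℝ → ℝ} (δ : ℝ) (n : E2) (ξ : Fin 2 → ℤ) (i : Fin 2) :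
    symb w δ (-n) ξ i = -(starRingEnd ℂ) (symb w δ n ξ i) := by
  rw [symb_eq_F, symb_eq_F, halfSp_neg]
  have hmp : MeasurePreserving (Neg.neg : E2 → E2) volume volume :=
    Measure.measurePreserving_neg _
  have hemb : MeasurableEmbedding (Neg.neg : E2 → E2) :=
    (MeasurableEquiv.neg E2).measurableEmbedding
  have h1 : (∫ s in (Neg.neg : E2 → E2) ⁻¹' (halfSp n), F w δ ξ i s)
      = ∫ s in halfSp n, F w δ ξ i (-s) := by
    rw [← hmp.setIntegral_preimage_emb hemb (fun y => F w δ ξ i (-y)) (halfSp n)]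
    refine integral_congr_ae (Filter.Eventually.of_forall fun s => ?_)
    simp only [neg_neg]
  rw [h1]
  have h2 : ∀ s : E2, F w δ ξ i (-s) = -(starRingEnd ℂ) (F w δ ξ i s) := by
    intro s
    unfold F
    have hni : (-s) i = -(s i) := rfl
    have hnn : ‖(-s : E2)‖ = ‖s‖ := norm_neg s
    have hsum : (∑ j, (ξ j : ℝ) * (-s) j) = -(∑ j, (ξ j : ℝ) * s j) := by
      rw [← Finset.sum_neg_distrib]
      refine Finset.sum_congr rfl fun j _ => ?_
      have : (-s) j = -(s j) := rfl
      rw [this]; ring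
    rw [hni, hnn, hsum]
    have e1 : ((wS w δ ‖s‖ * -(s i) / ‖s‖ : ℝ) : ℂ) = -((wS w δ ‖s‖ * s i / ‖s‖ : ℝ) : ℂ) := by
      push_cast; ring
    have e2 : Complex.I * ((-(∑ j, (ξ j : ℝ) * s j) : ℝ) : ℂ)
        = -Complex.I * ((∑ j, (ξ j : ℝ) * s j : ℝ) : ℂ) := by
      push_cast; ring
    rw [e1, e2, map_mul, Complex.conj_ofReal, map_sub, map_one, ← Complex.exp_conj,
      map_mul, Complex.conj_I, Complex.conj_ofReal]
    ring
  rw [integral_congr_ae (Filter.Eventually.of_forall fun s => h2 s)]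
  rw [integral_neg, integral_conj, map_mul, map_ofNat]
  ring

/-- The linear functional `s ↦ ∑ i, a i * s i` on `E2`. -/
def lfun (a : Fin 2 → ℝ) : E2 →ₗ[ℝ] ℝ where
  toFun s := ∑ i, a i * s i
  map_add' s t := by
    rw [← Finset.sum_add_distrib]
    refine Finset.sum_congr rfl fun i _ => ?_
    have : (s + t) i = s i + t i := rfl
    rw [this]; ring
  map_smul' c s := by
    have h : ∀ j, (c • s) j = c * s j := fun j => rfl
    simp only [RingHom.id_apply, smul_eq_mul, Finset.mul_sum, h]
    exact Finset.sum_congr rfl fun i _ => by ring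

lemma lfun_single (a : Fin 2 → ℝ) (i : Fin 2) (x : ℝ) :
    lfun a (EuclideanSpace.single i x) = a i * x := by
  simp only [lfun, LinearMap.coe_mk, AddHom.coe_mk]
  rw [Fin.sum_univ_two]
  fin_cases i <;> simp [EuclideanSpace.single_apply]

lemma hyperplane_null {a : Fin 2 → ℝ} {i : Fin 2} (hai : a i ≠ 0) (c : ℝ) :
    volume {s : E2 | ∑ j, a j * s j = c} = 0 := by
  set v : E2 := EuclideanSpace.single i (c / a i) with hv
  have hfv : lfun a v = c := by rw [hv, lfun_single]; field_simp
  have hker : LinearMap.ker (lfun a) ≠ ⊤ := by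
    intro h
    have : lfun a (EuclideanSpace.single i 1) = 0 := by
      have := LinearMap.ker_eq_top.mp h
      rw [this]; rfl
    rw [lfun_single] at this
    simp at this
    exact hai this
  have hker0 : volume (LinearMap.ker (lfun a) : Set E2) = 0 :=
    Measure.addHaar_submodule _ _ hker
  have hset : {s : E2 | ∑ j, a j * s j = c}
      = (fun s : E2 => s + (-v)) ⁻¹' (LinearMap.ker (lfun a) : Set E2) := by
    ext s
    simp only [mem_setOf_eq, mem_preimage, SetLike.mem_coe, LinearMap.mem_ker, map_add,
      map_neg, hfv]
    constructor
    · intro h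
      have : lfun a s = c := h
      rw [this]; ring
    · intro h
      have : lfun a s - c = 0 := by linarith [h]
      have h2 : lfun a s = c := by linarith
      exact h2
  rw [hset, measure_preimage_add_right, hker0]

lemma support_pos_meas {w : ℝ → ℝ}
    (hmom : (∫ x : E2, w ‖x‖ * ‖x‖) = 2) {δ : ℝ} (hδ : 0 < δ) :
    0 < volume {s : E2 | w (‖s‖ / δ) ≠ 0} := by
  have h1 : 0 < volume {x : E2 | w ‖x‖ ≠ 0} := by
    by_contra h
    push_neg at h
    have h0 : volume {x : E2 | w ‖x‖ ≠ 0} = 0 := le_antisymm (by simpa using h) zero_le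
    have hae : (fun x : E2 => w ‖x‖ * ‖x‖) =ᵐ[volume] (fun _ => (0:ℝ)) := by
      rw [Filter.EventuallyEq, ae_iff]
      refine measure_mono_null (fun x hx => ?_) h0
      simp only [mem_setOf_eq] at hx ⊢
      intro hw0
      exact hx (by rw [hw0, zero_mul])
    rw [integral_congr_ae hae] at hmom
    simp at hmom
  have hset : {s : E2 | w (‖s‖ / δ) ≠ 0} = (fun s : E2 => δ⁻¹ • s) ⁻¹' {x : E2 | w ‖x‖ ≠ 0} := by
    ext s
    simp only [mem_setOf_eq, mem_preimage]
    have : ‖δ⁻¹ • s‖ = ‖s‖ / δ := by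
      rw [norm_smul, norm_inv, Real.norm_eq_abs, abs_of_pos hδ]; ring
    rw [this]
  rw [hset, Measure.addHaar_preimage_smul volume (inv_ne_zero hδ.ne')]
  exact ENNReal.mul_pos (by simp; positivity) h1.ne'

lemma halfplane_support_pos {w : ℝ → ℝ}
    (hmom : (∫ x : E2, w ‖x‖ * ‖x‖) = 2) {δ : ℝ} (hδ : 0 < δ)
    {n : E2} (hn : ‖n‖ = 1) :
    0 < volume ({s : E2 | w (‖s‖ / δ) ≠ 0} ∩ {s : E2 | 0 < ∑ i, n i * s i}) := by
  set S := {s : E2 | w (‖s‖ / δ) ≠ 0} with hS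
  set P := {s : E2 | 0 < ∑ i, n i * s i} with hP
  have hni : ∃ i, n i ≠ 0 := by
    by_contra h
    push_neg at h
    have : n = 0 := by
      ext i; exact h i
    rw [this] at hn
    simp at hn
  obtain ⟨i, hi⟩ := hni
  have hplane : volume {s : E2 | ∑ j, n j * s j = 0} = 0 := hyperplane_null hi 0
  have hSneg : (Neg.neg : E2 → E2) ⁻¹' (S ∩ P) = S ∩ {s : E2 | ∑ i, n i * s i < 0} := by
    ext s
    simp only [mem_preimage, mem_inter_iff, mem_setOf_eq, hS, hP]
    have h1 : ‖(-s : E2)‖ = ‖s‖ := norm_neg s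
    have h2 : (∑ j, n j * (-s) j) = -(∑ j, n j * s j) := by
      rw [← Finset.sum_neg_distrib]
      refine Finset.sum_congr rfl fun j _ => ?_
      have : (-s) j = -(s j) := rfl
      rw [this]; ring
    rw [h1, h2]
    constructor
    · rintro ⟨ha, hb⟩; exact ⟨ha, by linarith⟩
    · rintro ⟨ha, hb⟩; exact ⟨ha, by linarith⟩
  have hcover : S ⊆ (S ∩ P) ∪ (S ∩ {s : E2 | ∑ j, n j * s j < 0})
      ∪ {s : E2 | ∑ j, n j * s j = 0} := by
    intro s hs
    rcases lt_trichotomy (∑ j, n j * s j) 0 with h | h | h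
    · exact Or.inl (Or.inr ⟨hs, h⟩)
    · exact Or.inr h
    · exact Or.inl (Or.inl ⟨hs, h⟩)
  have hmp : volume (S ∩ {s : E2 | ∑ j, n j * s j < 0}) = volume (S ∩ P) := by
    rw [← hSneg]
    exact (Measure.measurePreserving_neg (volume : Measure E2)).measure_preimage_emb
      (MeasurableEquiv.neg E2).measurableEmbedding _
  by_contra h
  push_neg at h
  have h0 : volume (S ∩ P) = 0 := le_antisymm (by simpa using h) zero_le
  have hS0 : volume S = 0 := by
    have h1 := measure_mono (μ := volume) hcover
    have h2 := measure_union_le (μ := volume)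
      ((S ∩ P) ∪ (S ∩ {s : E2 | ∑ j, n j * s j < 0})) {s : E2 | ∑ j, n j * s j = 0}
    have h3 := measure_union_le (μ := volume) (S ∩ P) (S ∩ {s : E2 | ∑ j, n j * s j < 0})
    rw [hplane, add_zero] at h2
    rw [hmp, h0, add_zero] at h3
    exact le_antisymm (h1.trans (h2.trans h3)) zero_le
  exact absurd hS0 (support_pos_meas hmom hδ).ne'

lemma halfSp_measurable (n : E2) : MeasurableSet (halfSp n) := by
  have hc : Continuous fun z : E2 => ∑ i, z i * n i :=
    continuous_finset_sum _ fun i _ => (coord_continuous i).mul continuous_const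
  exact (isClosed_le continuous_const hc).measurableSet

/-- real part of the symbol integrand -/
def reF (w : ℝ → ℝ) (δ : ℝ) (ξ : Fin 2 → ℤ) (i : Fin 2) (s : E2) : ℝ :=
  wS w δ ‖s‖ * s i / ‖s‖ * (Real.cos (∑ j, (ξ j : ℝ) * s j) - 1)

lemma F_re (w : ℝ → ℝ) (δ : ℝ) (ξ : Fin 2 → ℤ) (i : Fin 2) (s : E2) :
    (F w δ ξ i s).re = reF w δ ξ i s := by
  unfold F reF
  rw [Complex.mul_re]
  simp [Complex.exp_re, Complex.exp_im]

lemma symb_re (w : ℝ → ℝ) (hwmeas : Measurable w) (hwnn : ∀ r, 0 ≤ w r)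
    (hmom : (∫ x : E2, w ‖x‖ * ‖x‖) = 2) {δ : ℝ} (hδ : 0 < δ)
    (n : E2) (ξ : Fin 2 → ℤ) (i : Fin 2) :
    (symb w δ n ξ i).re = 2 * ∫ s in halfSp n, reF w δ ξ i s := by
  rw [symb_eq_F]
  have h2 : (2 * ∫ s in halfSp n, F w δ ξ i s).re = 2 * (∫ s in halfSp n, F w δ ξ i s).re := by
    simp [Complex.mul_re]
  rw [h2]
  congr 1
  have h3 := integral_re (μ := volume.restrict (halfSp n))
    ((F_integrable hwmeas hwnn hmom hδ ξ i).integrableOn)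
  simp only [RCLike.re_to_complex] at h3
  rw [← h3]
  exact integral_congr_ae (Filter.Eventually.of_forall fun s => F_re w δ ξ i s)

lemma re_sum_neg {w : ℝ → ℝ} (hwmeas : Measurable w) (hwnn : ∀ r, 0 ≤ w r)
    (hmom : (∫ x : E2, w ‖x‖ * ‖x‖) = 2) {δ : ℝ} (hδ : 0 < δ)
    {n : E2} (hn : ‖n‖ = 1) {ξ : Fin 2 → ℤ} (hξ : ξ ≠ 0) :
    (∑ i, n i * (symb w δ n ξ i).re) < 0 := by
  classical
  set H := halfSp n with hH
  -- the combined integrand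
  set g : E2 → ℝ := fun s =>
    wS w δ ‖s‖ * ((∑ i, n i * s i) / ‖s‖) * (Real.cos (∑ j, (ξ j : ℝ) * s j) - 1) with hg
  have hgsum : ∀ s : E2, g s = n 0 * reF w δ ξ 0 s + n 1 * reF w δ ξ 1 s := by
    intro s
    simp only [hg, reF, Fin.sum_univ_two]
    ring
  have hreint : ∀ i, IntegrableOn (reF w δ ξ i) H volume := by
    intro i
    have := ((F_integrable hwmeas hwnn hmom hδ ξ i).integrableOn (s := H)).re
    exact this.congr (Filter.Eventually.of_forall fun s => F_re w δ ξ i s)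
  have hgint : IntegrableOn g H volume := by
    have := ((hreint 0).const_mul (n 0)).add ((hreint 1).const_mul (n 1))
    exact this.congr (Filter.Eventually.of_forall fun s => (hgsum s).symm)
  have hsum : (∑ i, n i * (symb w δ n ξ i).re) = 2 * ∫ s in H, g s := by
    rw [Fin.sum_univ_two, symb_re w hwmeas hwnn hmom hδ, symb_re w hwmeas hwnn hmom hδ]
    rw [integral_congr_ae (Filter.Eventually.of_forall fun s => hgsum s)]
    rw [integral_add ((hreint 0).const_mul (n 0)) ((hreint 1).const_mul (n 1)),
      integral_const_mul, integral_const_mul]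
    ring
  rw [hsum]
  -- it suffices to show the integral of -g is positive
  have key : 0 < ∫ s in H, -g s := by
    have hnonneg : 0 ≤ᵐ[volume.restrict H] fun s => -g s := by
      rw [Filter.EventuallyLE, ae_restrict_iff' (halfSp_measurable n)]
      refine Filter.Eventually.of_forall fun s hs => ?_
      have h1 : 0 ≤ wS w δ ‖s‖ := div_nonneg (hwnn _) (by positivity)
      have h2 : 0 ≤ (∑ i, n i * s i) / ‖s‖ := by
        apply div_nonneg ?_ (norm_nonneg s)
        have : 0 ≤ ∑ i, s i * n i := hs
        calc (0:ℝ) ≤ ∑ i, s i * n i := this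
        _ = ∑ i, n i * s i := by refine Finset.sum_congr rfl fun i _ => mul_comm _ _
      have h3 : Real.cos (∑ j, (ξ j : ℝ) * s j) - 1 ≤ 0 := by
        have := Real.cos_le_one (∑ j, (ξ j : ℝ) * s j)
        linarith
      simp only [Pi.zero_apply, neg_nonneg, hg]
      exact mul_nonpos_of_nonneg_of_nonpos (mul_nonneg h1 h2) h3
    rw [setIntegral_pos_iff_support_of_nonneg_ae hnonneg hgint.neg]
    -- find a positive measure subset of the support
    obtain ⟨i, hi⟩ : ∃ i, ξ i ≠ 0 := by
      by_contra hcon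
      push_neg at hcon
      exact hξ (funext fun i => hcon i)
    have hL : volume (⋃ k : ℤ, {s : E2 | ∑ j, (ξ j : ℝ) * s j = (k : ℝ) * (2 * π)}) = 0 := by
      refine measure_iUnion_null fun k => ?_
      exact hyperplane_null (a := fun j => (ξ j : ℝ)) (i := i) (by simpa using (Int.cast_ne_zero (α := ℝ)).mpr hi) _
    set SP := ({s : E2 | w (‖s‖ / δ) ≠ 0} ∩ {s : E2 | 0 < ∑ i, n i * s i}) with hSP
    set L := (⋃ k : ℤ, {s : E2 | ∑ j, (ξ j : ℝ) * s j = (k : ℝ) * (2 * π)}) with hLdef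
    have hsub : SP \ L ⊆ Function.support (fun s => -g s) ∩ H := by
      rintro s ⟨⟨hw, hp⟩, hnL⟩
      simp only [mem_setOf_eq] at hw hp
      constructor
      · -- in the support
        simp only [Function.mem_support, hg, neg_ne_zero]
        have h1 : 0 < wS w δ ‖s‖ := by
          unfold wS
          apply div_pos (lt_of_le_of_ne (hwnn _) (Ne.symm hw)) (by positivity)
        have hs0 : s ≠ 0 := by
          intro h0
          rw [h0] at hp
          simp at hp
          -- sum over zero vector is zero
        have h2 : 0 < (∑ i, n i * s i) / ‖s‖ :=
          div_pos hp (norm_pos_iff.mpr hs0)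
        have h3 : Real.cos (∑ j, (ξ j : ℝ) * s j) - 1 < 0 := by
          have hne : Real.cos (∑ j, (ξ j : ℝ) * s j) ≠ 1 := by
            intro hcos
            obtain ⟨k, hk⟩ := (Real.cos_eq_one_iff _).mp hcos
            apply hnL
            exact mem_iUnion.mpr ⟨k, by simpa using hk.symm⟩
          have := Real.cos_le_one (∑ j, (ξ j : ℝ) * s j)
          cases lt_or_eq_of_le this with
          | inl h => linarith
          | inr h => exact absurd h hne
        exact ne_of_lt (mul_neg_of_pos_of_neg (mul_pos h1 h2) h3)
      · -- in H
        show (0:ℝ) ≤ ∑ i, s i * n i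
        have : (∑ i, s i * n i) = ∑ i, n i * s i :=
          Finset.sum_congr rfl fun i _ => mul_comm _ _
        rw [this]
        exact le_of_lt hp
    have hSPpos : 0 < volume SP := halfplane_support_pos hmom hδ hn
    have hTpos : 0 < volume (SP \ L) := by
      by_contra hcon
      push_neg at hcon
      have hT0 : volume (SP \ L) = 0 := le_antisymm (by simpa using hcon) zero_le
      have : volume SP ≤ volume (SP \ L) + volume L :=
        (measure_mono (fun s hs => by
          by_cases hsl : s ∈ L
          · exact Or.inr hsl
          · exact Or.inl ⟨hs, hsl⟩ : SP ⊆ (SP \ L) ∪ L)).trans (measure_union_le _ _)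
      rw [hT0, hL, add_zero] at this
      exact absurd (le_antisymm this zero_le) hSPpos.ne'
    exact hTpos.trans_le (measure_mono hsub)
  have : ∫ s in H, -g s = -∫ s in H, g s := integral_neg _
  rw [this] at key
  linarith

lemma lamSq_pos {w : ℝ → ℝ} (hwmeas : Measurable w) (hwnn : ∀ r, 0 ≤ w r)
    (hmom : (∫ x : E2, w ‖x‖ * ‖x‖) = 2) {δ : ℝ} (hδ : 0 < δ)
    {n : E2} (hn : ‖n‖ = 1) {ξ : Fin 2 → ℤ} (hξ : ξ ≠ 0) :
    0 < ∑ i, Complex.normSq (symb w δ n ξ i) := by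
  have hne := re_sum_neg hwmeas hwnn hmom hδ hn hξ
  have h0 : 0 ≤ ∑ i, Complex.normSq (symb w δ n ξ i) :=
    Finset.sum_nonneg fun i _ => Complex.normSq_nonneg _
  rcases h0.lt_or_eq with h | h
  · exact h
  · exfalso
    have hz : ∀ i, symb w δ n ξ i = 0 := by
      intro i
      have := (Finset.sum_eq_zero_iff_of_nonneg
        (fun j _ => Complex.normSq_nonneg (symb w δ n ξ j))).mp h.symm i (Finset.mem_univ i)
      exact Complex.normSq_eq_zero.mp this
    rw [Fin.sum_univ_two, hz 0, hz 1] at hne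
    simp at hne

lemma normSq_comb_le (x y u0 u1 : ℂ) :
    Complex.normSq (x * u0 + y * u1)
      ≤ (Complex.normSq x + Complex.normSq y) * (Complex.normSq u0 + Complex.normSq u1) := by
  have e : ∀ z : ℂ, Complex.normSq z = ‖z‖ ^ 2 := fun z => by
    rw [Complex.normSq_eq_norm_sq]
  rw [e, e, e, e, e]
  have h := norm_add_le (x * u0) (y * u1)
  rw [norm_mul, norm_mul] at h
  nlinarith [norm_nonneg x, norm_nonneg y, norm_nonneg u0, norm_nonneg u1,
    norm_nonneg (x * u0 + y * u1), sq_nonneg (‖x‖ * ‖u1‖ - ‖y‖ * ‖u0‖)]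

lemma rot_symb_neg0 {w : ℝ → ℝ} (δ : ℝ) (n : E2) (ξ : Fin 2 → ℤ) :
    rot (symb w δ (-n) ξ) 0 = (starRingEnd ℂ) (symb w δ n ξ 1) := by
  simp [rot, symb_neg]

lemma rot_symb_neg1 {w : ℝ → ℝ} (δ : ℝ) (n : E2) (ξ : Fin 2 → ℤ) :
    rot (symb w δ (-n) ξ) 1 = -(starRingEnd ℂ) (symb w δ n ξ 0) := by
  simp [rot, symb_neg]


/-- two-dimensional nonlocal Helmholtz decomposition on the Fourier side:
`u^ = λ_δ^n p^ + R λ_δ^{-n} q^` with unique `p^, q^`, the second term nonlocally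
divergence free, and a uniform energy estimate. -/
theorem nonlocal_helmholtz_2d
    (w : ℝ → ℝ) (hwmeas : Measurable w) (hwnn : ∀ r, 0 ≤ w r)
    (hwsupp : ∀ r, 1 < r → w r = 0)
    (hmom : (∫ x : EuclideanSpace ℝ (Fin 2), w ‖x‖ * ‖x‖) = 2) :
    ∃ C > (0 : ℝ), ∃ δ₀ > (0 : ℝ),
      ∀ (n : EuclideanSpace ℝ (Fin 2)), ‖n‖ = 1 → ∀ δ : ℝ, 0 < δ → δ ≤ δ₀ →
        ∀ u : (Fin 2 → ℤ) → Fin 2 → ℂ,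
          Summable (fun ξ : {ξ : Fin 2 → ℤ // ξ ≠ 0} => ∑ i, Complex.normSq (u ξ.1 i)) →
          ∃ p q : (Fin 2 → ℤ) → ℂ,
            (∀ ξ : Fin 2 → ℤ, ξ ≠ 0 → ∀ i,
              u ξ i = symb w δ n ξ i * p ξ + rot (symb w δ (-n) ξ) i * q ξ) ∧
            (∀ ξ : Fin 2 → ℤ, ξ ≠ 0 → ∀ p' q' : ℂ,
              (∀ i, u ξ i = symb w δ n ξ i * p' + rot (symb w δ (-n) ξ) i * q') →
              p' = p ξ ∧ q' = q ξ) ∧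
            (∀ ξ : Fin 2 → ℤ, ξ ≠ 0 →
              (∑ i, symb w δ (-n) ξ i * rot (symb w δ (-n) ξ) i) * q ξ = 0) ∧
            (∑' ξ : {ξ : Fin 2 → ℤ // ξ ≠ 0},
                lamSq w δ n ξ.1 * (Complex.normSq (p ξ.1) + Complex.normSq (q ξ.1)))
              ≤ C * ∑' ξ : {ξ : Fin 2 → ℤ // ξ ≠ 0}, ∑ i, Complex.normSq (u ξ.1 i) := by
  refine ⟨2, by norm_num, 1, by norm_num, ?_⟩
  intro n hn δ hδ hδ1 u hsum
  set a : (Fin 2 → ℤ) → ℂ := fun ξ => symb w δ n ξ 0 with ha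
  set b : (Fin 2 → ℤ) → ℂ := fun ξ => symb w δ n ξ 1 with hb
  have hmpos : ∀ ξ : Fin 2 → ℤ, ξ ≠ 0 → 0 < lamSq w δ n ξ := fun ξ hξ =>
    lamSq_pos hwmeas hwnn hmom hδ hn hξ
  have hmC : ∀ ξ : Fin 2 → ℤ, ξ ≠ 0 → ((lamSq w δ n ξ : ℝ) : ℂ) ≠ 0 := fun ξ hξ =>
    Complex.ofReal_ne_zero.mpr (hmpos ξ hξ).ne'
  have hmc : ∀ ξ : Fin 2 → ℤ,
      ((lamSq w δ n ξ : ℝ) : ℂ)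
        = (starRingEnd ℂ) (a ξ) * a ξ + (starRingEnd ℂ) (b ξ) * b ξ := by
    intro ξ
    rw [lamSq, Fin.sum_univ_two, Complex.ofReal_add,
      Complex.normSq_eq_conj_mul_self, Complex.normSq_eq_conj_mul_self]
  refine ⟨fun ξ => ((starRingEnd ℂ) (a ξ) * u ξ 0 + (starRingEnd ℂ) (b ξ) * u ξ 1) /
      ((lamSq w δ n ξ : ℝ) : ℂ),
    fun ξ => (b ξ * u ξ 0 - a ξ * u ξ 1) / ((lamSq w δ n ξ : ℝ) : ℂ), ?_, ?_, ?_, ?_⟩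
  · -- decomposition
    intro ξ hξ i
    have hm' : (starRingEnd ℂ) (a ξ) * a ξ + (starRingEnd ℂ) (b ξ) * b ξ ≠ 0 :=
      (hmc ξ) ▸ hmC ξ hξ
    fin_cases i
    · show u ξ 0 = a ξ * _ + rot (symb w δ (-n) ξ) 0 * _
      beta_reduce
      rw [rot_symb_neg0, hmc ξ]
      rw [mul_div_assoc', mul_div_assoc', ← add_div, eq_div_iff hm']
      ring
    · show u ξ 1 = b ξ * _ + rot (symb w δ (-n) ξ) 1 * _
      beta_reduce
      rw [rot_symb_neg1, hmc ξ]
      rw [mul_div_assoc', mul_div_assoc', ← add_div, eq_div_iff hm']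
      ring
  · -- uniqueness
    intro ξ hξ p' q' h
    have hm' : (starRingEnd ℂ) (a ξ) * a ξ + (starRingEnd ℂ) (b ξ) * b ξ ≠ 0 :=
      (hmc ξ) ▸ hmC ξ hξ
    have h0 := h 0
    have h1 := h 1
    rw [rot_symb_neg0] at h0
    rw [rot_symb_neg1] at h1
    have e0 : u ξ 0 = a ξ * p' + (starRingEnd ℂ) (b ξ) * q' := h0
    have e1 : u ξ 1 = b ξ * p' + -(starRingEnd ℂ) (a ξ) * q' := h1
    constructor
    · show p' = _
      beta_reduce
      rw [e0, e1, hmc ξ]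
      field_simp
      ring
    · show q' = _
      beta_reduce
      rw [e0, e1, hmc ξ]
      rw [eq_div_iff hm']
      ring
  · -- divergence free
    intro ξ hξ
    have hz : (∑ i, symb w δ (-n) ξ i * rot (symb w δ (-n) ξ) i) = 0 := by
      rw [Fin.sum_univ_two]
      show symb w δ (-n) ξ 0 * (-(symb w δ (-n) ξ 1)) +
        symb w δ (-n) ξ 1 * (symb w δ (-n) ξ 0) = 0
      ring
    rw [hz, zero_mul]
  · -- energy estimate
    have hbound : ∀ ξ : Fin 2 → ℤ, ξ ≠ 0 →
        lamSq w δ n ξ *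
          (Complex.normSq (((starRingEnd ℂ) (a ξ) * u ξ 0 + (starRingEnd ℂ) (b ξ) * u ξ 1) /
              ((lamSq w δ n ξ : ℝ) : ℂ)) +
            Complex.normSq ((b ξ * u ξ 0 - a ξ * u ξ 1) / ((lamSq w δ n ξ : ℝ) : ℂ)))
        ≤ 2 * ∑ i, Complex.normSq (u ξ i) := by
      intro ξ hξ
      set m := lamSq w δ n ξ with hm
      set U := ∑ i, Complex.normSq (u ξ i) with hU
      have hmp := hmpos ξ hξ
      have hUeq : U = Complex.normSq (u ξ 0) + Complex.normSq (u ξ 1) := by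
        rw [hU, Fin.sum_univ_two]
      have hmeq : m = Complex.normSq (a ξ) + Complex.normSq (b ξ) := by
        rw [hm, lamSq, Fin.sum_univ_two]
      have hp1 : Complex.normSq ((starRingEnd ℂ) (a ξ) * u ξ 0 + (starRingEnd ℂ) (b ξ) * u ξ 1)
          ≤ m * U := by
        calc Complex.normSq ((starRingEnd ℂ) (a ξ) * u ξ 0 + (starRingEnd ℂ) (b ξ) * u ξ 1)
            ≤ (Complex.normSq ((starRingEnd ℂ) (a ξ)) + Complex.normSq ((starRingEnd ℂ) (b ξ)))
              * (Complex.normSq (u ξ 0) + Complex.normSq (u ξ 1)) := normSq_comb_le _ _ _ _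
        _ = m * U := by rw [Complex.normSq_conj, Complex.normSq_conj, ← hmeq, ← hUeq]
      have hq1 : Complex.normSq (b ξ * u ξ 0 - a ξ * u ξ 1) ≤ m * U := by
        have : b ξ * u ξ 0 - a ξ * u ξ 1 = b ξ * u ξ 0 + (-(a ξ)) * u ξ 1 := by ring
        rw [this]
        calc Complex.normSq (b ξ * u ξ 0 + (-(a ξ)) * u ξ 1)
            ≤ (Complex.normSq (b ξ) + Complex.normSq (-(a ξ)))
              * (Complex.normSq (u ξ 0) + Complex.normSq (u ξ 1)) := normSq_comb_le _ _ _ _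
        _ = m * U := by rw [Complex.normSq_neg, ← hUeq]; rw [hmeq]; ring
      rw [Complex.normSq_div, Complex.normSq_div, Complex.normSq_ofReal]
      have hmm : (0:ℝ) < m * m := mul_pos hmp hmp
      have h1 : Complex.normSq ((starRingEnd ℂ) (a ξ) * u ξ 0 + (starRingEnd ℂ) (b ξ) * u ξ 1)
          / (m * m) ≤ U / m := by
        rw [div_le_div_iff₀ hmm hmp]
        calc Complex.normSq ((starRingEnd ℂ) (a ξ) * u ξ 0 + (starRingEnd ℂ) (b ξ) * u ξ 1) * m
            ≤ (m * U) * m := mul_le_mul_of_nonneg_right hp1 hmp.le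
        _ = U * (m * m) := by ring
      have h2 : Complex.normSq (b ξ * u ξ 0 - a ξ * u ξ 1) / (m * m) ≤ U / m := by
        rw [div_le_div_iff₀ hmm hmp]
        calc Complex.normSq (b ξ * u ξ 0 - a ξ * u ξ 1) * m
            ≤ (m * U) * m := mul_le_mul_of_nonneg_right hq1 hmp.le
        _ = U * (m * m) := by ring
      calc m * (Complex.normSq ((starRingEnd ℂ) (a ξ) * u ξ 0 + (starRingEnd ℂ) (b ξ) * u ξ 1)
              / (m * m) + Complex.normSq (b ξ * u ξ 0 - a ξ * u ξ 1) / (m * m))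
          ≤ m * (U / m + U / m) := mul_le_mul_of_nonneg_left (add_le_add h1 h2) hmp.le
      _ = 2 * U := by rw [← add_div, mul_div_assoc', mul_div_cancel_left₀ _ hmp.ne']; ring
    have hle : ∀ ξs : {ξ : Fin 2 → ℤ // ξ ≠ 0},
        lamSq w δ n ξs.1 *
          (Complex.normSq (((starRingEnd ℂ) (a ξs.1) * u ξs.1 0 + (starRingEnd ℂ) (b ξs.1) * u ξs.1 1) /
              ((lamSq w δ n ξs.1 : ℝ) : ℂ)) +
            Complex.normSq ((b ξs.1 * u ξs.1 0 - a ξs.1 * u ξs.1 1) / ((lamSq w δ n ξs.1 : ℝ) : ℂ)))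
        ≤ 2 * ∑ i, Complex.normSq (u ξs.1 i) := fun ξs => hbound ξs.1 ξs.2
    have hf : Summable (fun ξs : {ξ : Fin 2 → ℤ // ξ ≠ 0} =>
        lamSq w δ n ξs.1 *
          (Complex.normSq (((starRingEnd ℂ) (a ξs.1) * u ξs.1 0 + (starRingEnd ℂ) (b ξs.1) * u ξs.1 1) /
              ((lamSq w δ n ξs.1 : ℝ) : ℂ)) +
            Complex.normSq ((b ξs.1 * u ξs.1 0 - a ξs.1 * u ξs.1 1) / ((lamSq w δ n ξs.1 : ℝ) : ℂ)))) :=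
      Summable.of_nonneg_of_le
        (fun ξs => mul_nonneg (hmpos ξs.1 ξs.2).le
          (add_nonneg (Complex.normSq_nonneg _) (Complex.normSq_nonneg _)))
        hle (hsum.mul_left 2)
    calc (∑' ξs : {ξ : Fin 2 → ℤ // ξ ≠ 0},
        lamSq w δ n ξs.1 *
          (Complex.normSq (((starRingEnd ℂ) (a ξs.1) * u ξs.1 0 + (starRingEnd ℂ) (b ξs.1) * u ξs.1 1) /
              ((lamSq w δ n ξs.1 : ℝ) : ℂ)) +
            Complex.normSq ((b ξs.1 * u ξs.1 0 - a ξs.1 * u ξs.1 1) / ((lamSq w δ n ξs.1 : ℝ) : ℂ))))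
        ≤ ∑' ξs : {ξ : Fin 2 → ℤ // ξ ≠ 0}, 2 * ∑ i, Complex.normSq (u ξs.1 i) :=
          Summable.tsum_le_tsum hle hf (hsum.mul_left 2)
    _ = 2 * ∑' ξs : {ξ : Fin 2 → ℤ // ξ ≠ 0}, ∑ i, Complex.normSq (u ξs.1 i) := tsum_mul_left

end
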